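/- arXiv:1911.08182 — 4 statements merged into one kernel-verified Lean document; each statement's English description precedes it below -/
import Mathlib

section
/- Let N be a finite set of nodes, H ⊆ N the honest nodes, and for each honest node i let T_i ⊆ N be its trust set and q_i ∈ (0.5,1] its quota. Given an opinion profile 𝒪 (assigning to each honest node an opinion in {0,1} and to each Byzantine node a function from honest nodes to {0,1}), let T_j^𝒪(x) be the set of nodes trusted by j that reveal opinion x to j. Define β_{ij} = min{|T_i ∩ T_j|, b_i·|T_i|, b_j·|T_j|} where b_i is the Byzantine tolerance fraction of node i. Then for any profile 𝒪 and honest nodes i, j, if |T_i^𝒪(x)| > 0 then |T_j^𝒪(x) ∩ H| ≥ |T_i ∩ T_j| + |T_i^𝒪(x)| − |T_i| − β_{ij}. -/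
/-!
Among the nodes of `T i ∩ T j` that reveal `x` to `i` there are, by inclusion–exclusion inside
`T i`, at least `|T i ∩ T j| + |T_i(x)| - |T i|`. At most `β` of them are Byzantine, and each honest
one reveals the same `x` to `j`, so it is counted in `T_j(x) ∩ H`.
-/

open Finset

theorem Finset.card_add_card_le_card_inter_add_card {α : Type*} [DecidableEq α]
    {s t u : Finset α} (hs : s ⊆ u) (ht : t ⊆ u) : #s + #t ≤ #(s ∩ t) + #u := by
  rw [← card_union_add_card_inter s t, add_comm]
  exact Nat.add_le_add_left (card_le_card (union_subset hs ht)) _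

section Revealing

variable {V α : Type*} [DecidableEq V] [DecidableEq α]
  {H : Finset V} {T : V → Finset V} {O : V → V → α}

theorem filter_mem_inter_filter_reveal_subset
    (hhonest : ∀ k ∈ H, ∀ u v : V, O k u = O k v) (i j : V) (x : α) :
    ((T i ∩ T j) ∩ (T i).filter (fun k => O k i = x)).filter (· ∈ H)
      ⊆ (T j).filter (fun k => O k j = x) ∩ H := by
  intro k hk
  simp only [mem_filter, mem_inter] at hk ⊢
  obtain ⟨⟨⟨-, hkj⟩, -, hki⟩, hkH⟩ := hk
  exact ⟨⟨hkj, hhonest k hkH j i ▸ hki⟩, hkH⟩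

theorem card_inter_add_card_filter_reveal_le
    (hhonest : ∀ k ∈ H, ∀ u v : V, O k u = O k v) (i j : V) (x : α) :
    #(T i ∩ T j) + #((T i).filter (fun k => O k i = x))
      ≤ #(T i) + #((T j).filter (fun k => O k j = x) ∩ H)
        + #((T i ∩ T j).filter (· ∉ H)) := by
  set S := (T i ∩ T j) ∩ (T i).filter (fun k => O k i = x)
  have hS : #(T i ∩ T j) + #((T i).filter (fun k => O k i = x)) ≤ #S + #(T i) :=
    card_add_card_le_card_inter_add_card inter_subset_left (filter_subset _ _)
  have honest : #(S.filter (· ∈ H)) ≤ #((T j).filter (fun k => O k j = x) ∩ H) :=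
    card_le_card (filter_mem_inter_filter_reveal_subset hhonest i j x)
  have byzantine : #(S.filter (· ∉ H)) ≤ #((T i ∩ T j).filter (· ∉ H)) :=
    card_le_card (filter_subset_filter _ inter_subset_left)
  have hsplit := card_filter_add_card_filter_not (s := S) (· ∈ H)
  omega

end Revealing

theorem qbtn_honest_lower_bound_general
    {V : Type*} [DecidableEq V]
    (H : Finset V)                    -- honest nodes
    (T : V → Finset V)                -- trust sets
    (O : V → V → Bool)                -- O k j = opinion node k reveals to node j
    (hhonest : ∀ k ∈ H, ∀ u v : V, O k u = O k v)  -- honest nodes reveal one opinion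
    (i j : V)
    (β : ℝ)
    -- at most β Byzantine nodes lie in T i ∩ T j
    (hbyz : ((((T i ∩ T j).filter (fun k => k ∉ H)).card : ℝ)) ≤ β)
    (x : Bool) :
    ((T i ∩ T j).card : ℝ) + (((T i).filter (fun k => O k i = x)).card : ℝ)
        - ((T i).card : ℝ) - β
      ≤ ((((T j).filter (fun k => O k j = x)) ∩ H).card : ℝ) := by
  have h : ((#(T i ∩ T j) + #((T i).filter (fun k => O k i = x)) : ℕ) : ℝ)
      ≤ ((#(T i) + #((T j).filter (fun k => O k j = x) ∩ H)
        + #((T i ∩ T j).filter (· ∉ H)) : ℕ) : ℝ) := by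
    exact_mod_cast card_inter_add_card_filter_reveal_le hhonest i j x
  push_cast at h
  linarith

/-- lower bound on the number of honest nodes with opinion `x`
seen by honest node `j`, given what honest node `i` sees (Lemma 1, eq. (1)). -/
theorem qbtn_honest_lower_bound
    {V : Type*} [DecidableEq V] [Fintype V]
    (H : Finset V)                    -- honest nodes
    (T : V → Finset V)                -- trust sets
    (b : V → ℝ)                       -- Byzantine tolerance fraction of each node
    (O : V → V → Bool)                -- O k j = opinion node k reveals to node j
    (hhonest : ∀ k ∈ H, ∀ u v : V, O k u = O k v)  -- honest nodes reveal one opinion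
    (i j : V) (hi : i ∈ H) (hj : j ∈ H)
    (β : ℝ)
    (hβ : β = min ((T i ∩ T j).card : ℝ)
              (min (b i * ((T i).card : ℝ)) (b j * ((T j).card : ℝ))))
    -- at most β Byzantine nodes lie in T i ∩ T j
    (hbyz : ((((T i ∩ T j).filter (fun k => k ∉ H)).card : ℝ)) ≤ β)
    (x : Bool)
    (hpos : 0 < ((T i).filter (fun k => O k i = x)).card) :
    ((T i ∩ T j).card : ℝ) + (((T i).filter (fun k => O k i = x)).card : ℝ)
        - ((T i).card : ℝ) - β
      ≤ ((((T j).filter (fun k => O k j = x)) ∩ H).card : ℝ) :=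
  qbtn_honest_lower_bound_general H T O hhonest i j β hbyz x
end

section
/- Under the same setup as in the lower-bound lemma: for any profile 𝒪 and honest nodes i, j, if |T_i^𝒪(x)| > 0, then the number of nodes in j's trust set revealing the opposite opinion satisfies |T_j^𝒪(x̄)| ≤ |T_j| − |T_i ∩ T_j| − |T_i^𝒪(x)| + |T_i| + β_{ij}. -/
/-!
Split `T j` into `T j \ T i` and `T i ∩ T j`. An honest node of the intersection that reveals
`!x` to `j` reveals `!x` to `i` as well, so the `!x`-revealers of the intersection are at most
its Byzantine nodes (at most `β`) plus the `!x`-revealers of `T i`, of which there are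
`|T i|` minus the number of its `x`-revealers.
-/

open Finset

theorem Finset.card_filter_add_card_inter_le {α : Type*} [DecidableEq α] (s t : Finset α)
    (p : α → Prop) [DecidablePred p] :
    #(t.filter p) + #(s ∩ t) ≤ #t + #((s ∩ t).filter p) := by
  have hsplit : t.filter p ⊆ (t \ s) ∪ (s ∩ t).filter p := by
    intro k hk
    rw [mem_filter] at hk
    by_cases hks : k ∈ s
    · exact mem_union_right _ (mem_filter.2 ⟨mem_inter.2 ⟨hks, hk.1⟩, hk.2⟩)
    · exact mem_union_left _ (mem_sdiff.2 ⟨hk.1, hks⟩)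
  have hpart : #(t \ s) + #(s ∩ t) = #t := by
    rw [inter_comm]; exact card_sdiff_add_card_inter t s
  have := (card_le_card hsplit).trans (card_union_le _ _)
  omega

theorem Finset.card_filter_bool_not_add {α : Type*} (s : Finset α) (f : α → Bool) (x : Bool) :
    #(s.filter (f · = !x)) + #(s.filter (f · = x)) = #s := by
  rw [add_comm]
  simp_rw [Bool.eq_not_iff]
  exact card_filter_add_card_filter_not (s := s) (fun k => f k = x)

theorem card_filter_opinion_le_card_not_mem_add {V : Type*} [DecidableEq V] {H : Finset V}
    {O : V → V → Bool} (hhonest : ∀ k ∈ H, ∀ u v : V, O k u = O k v) (s : Finset V) (u v : V)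
    (y : Bool) :
    #(s.filter (O · v = y)) ≤ #(s.filter (· ∉ H)) + #(s.filter (O · u = y)) := by
  refine (card_le_card fun k hk => ?_).trans (card_union_le _ _)
  rw [mem_filter] at hk
  by_cases hkH : k ∈ H
  · exact mem_union_right _ (mem_filter.2 ⟨hk.1, (hhonest k hkH u v).trans hk.2⟩)
  · exact mem_union_left _ (mem_filter.2 ⟨hk.1, hkH⟩)

theorem qbtn_opposite_upper_bound_general
    {V : Type*} [DecidableEq V]
    (H : Finset V)                    -- honest nodes
    (T : V → Finset V)                -- trust sets
    (O : V → V → Bool)                -- O k j = opinion node k reveals to node j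
    (hhonest : ∀ k ∈ H, ∀ u v : V, O k u = O k v)
    (i j : V)
    (β : ℝ)
    (hbyz : ((((T i ∩ T j).filter (fun k => k ∉ H)).card : ℝ)) ≤ β)
    (x : Bool) :
    (((T j).filter (fun k => O k j = !x)).card : ℝ)
      ≤ ((T j).card : ℝ) - ((T i ∩ T j).card : ℝ)
          - (((T i).filter (fun k => O k i = x)).card : ℝ)
          + ((T i).card : ℝ) + β := by
  have hsplit := card_filter_add_card_inter_le (T i) (T j) (O · j = !x)
  have hhon := card_filter_opinion_le_card_not_mem_add hhonest (T i ∩ T j) i j (!x)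
  have hmono : #((T i ∩ T j).filter (O · i = !x)) ≤ #((T i).filter (O · i = !x)) :=
    card_le_card (filter_subset_filter _ inter_subset_left)
  have hcompl := card_filter_bool_not_add (T i) (O · i) x
  have key : #((T j).filter (O · j = !x)) + #(T i ∩ T j) + #((T i).filter (O · i = x))
      ≤ #(T j) + #(T i) + #((T i ∩ T j).filter (· ∉ H)) := by
    omega
  have keyR : (#((T j).filter (O · j = !x)) : ℝ) + #(T i ∩ T j) + #((T i).filter (O · i = x))
      ≤ #(T j) + #(T i) + #((T i ∩ T j).filter (· ∉ H)) := by
    exact_mod_cast key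
  linarith

/-- upper bound on the number of nodes revealing the opposite
opinion `!x` to honest node `j` (Lemma 1, eq. (2)). -/
theorem qbtn_opposite_upper_bound
    {V : Type*} [DecidableEq V] [Fintype V]
    (H : Finset V)                    -- honest nodes
    (T : V → Finset V)                -- trust sets
    (b : V → ℝ)                       -- Byzantine tolerance fraction of each node
    (O : V → V → Bool)                -- O k j = opinion node k reveals to node j
    (hhonest : ∀ k ∈ H, ∀ u v : V, O k u = O k v)
    (i j : V) (hi : i ∈ H) (hj : j ∈ H)
    (β : ℝ)
    (hβ : β = min ((T i ∩ T j).card : ℝ)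
              (min (b i * ((T i).card : ℝ)) (b j * ((T j).card : ℝ))))
    (hbyz : ((((T i ∩ T j).filter (fun k => k ∉ H)).card : ℝ)) ≤ β)
    (x : Bool)
    (hpos : 0 < ((T i).filter (fun k => O k i = x)).card) :
    (((T j).filter (fun k => O k j = !x)).card : ℝ)
      ≤ ((T j).card : ℝ) - ((T i ∩ T j).card : ℝ)
          - (((T i).filter (fun k => O k i = x)).card : ℝ)
          + ((T i).card : ℝ) + β :=
  qbtn_opposite_upper_bound_general H T O hhonest i j β hbyz x
end

section
/- In the 3SAT reduction instance (as defined in the context): if the 3CNF formula φ is satisfiable via assignment α, then the sets Q_1 = {z_1, c_1,...,c_m} ∪ {σ(ρ(c_j)) : j ∈ [m]} and Q_2 = {z_0, y_1,...,y_n} ∪ {μ(x_i) : i ∈ [n]} are disjoint quora, where ρ(c_j) is a literal of clause c_j satisfied by α, σ maps literal x_i to p_i and ¬x_i to n_i, and μ(x_i) = n_i if α(x_i)=1 and μ(x_i) = p_i otherwise. -/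
/-- Node set of the reduction: `z_0, z_1`, clause nodes `c_j`, and for each
variable `x_i` the nodes `y_i, p_i, n_i`. -/
abbrev Node (n m : ℕ) := Fin 2 ⊕ (Fin m ⊕ Fin n × Fin 3)

variable {n m : ℕ}

def z0 : Node n m := Sum.inl 0
def z1 : Node n m := Sum.inl 1
def cl (j : Fin m) : Node n m := Sum.inr (Sum.inl j)
def yv (i : Fin n) : Node n m := Sum.inr (Sum.inr (i, 0))
def pv (i : Fin n) : Node n m := Sum.inr (Sum.inr (i, 1))
def nv (i : Fin n) : Node n m := Sum.inr (Sum.inr (i, 2))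

/-- `σ` maps a positive literal `x_i` to `p_i` and a negative literal `¬x_i`
to `n_i`. -/
def sig (l : Fin n × Bool) : Node n m := if l.2 then pv l.1 else nv l.1

/-- The winning-coalition collections of the reduction instance built from a
3CNF formula `φ` (clause `j` has literals `φ j 0, φ j 1, φ j 2`). -/
def Coal (φ : Fin m → Fin 3 → Fin n × Bool) : Node n m → Finset (Finset (Node n m)) :=
  fun v => match v with
  | Sum.inl a =>
      if a = 0 then {insert z0 (Finset.univ.image yv)}
      else {insert z1 (Finset.univ.image cl)}
  | Sum.inr (Sum.inl j) =>
      Finset.univ.image (fun u : Fin 3 => ({cl j, sig (φ j u)} : Finset (Node n m)))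
  | Sum.inr (Sum.inr (i, k)) =>
      if k = 0 then {({yv i, pv i} : Finset (Node n m)), {yv i, nv i}}
      else if k = 1 then {({pv i, z0} : Finset (Node n m)), {pv i, z1}}
      else {({nv i, z0} : Finset (Node n m)), {nv i, z1}}

/-- A quorum. -/
def IsQuorum {V : Type*} [DecidableEq V] (𝒞 : V → Finset (Finset V))
    (Q : Finset V) : Prop :=
  Q.Nonempty ∧ ∀ i ∈ Q, ∃ C ∈ 𝒞 i, C ⊆ Q

/-!
A clause node is backed by the node of the literal `ρ` picks in it, and every literal node by
`z₁` (or `z₀`); each `y_i` is backed by the node of the literal of `x_i` falsified by `α`. A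
node in both quora would be the node of a literal that `α` both satisfies and falsifies.
-/

open Finset

theorem sig_injective : Function.Injective (sig : Fin n × Bool → Node n m) := by
  rintro ⟨i, _ | _⟩ ⟨i', _ | _⟩ h <;> simp_all [sig, pv, nv]

theorem ite_nv_pv_eq_sig (i : Fin n) (b : Bool) :
    (if b then nv i else pv i : Node n m) = sig (i, !b) := by
  cases b <;> rfl

section Coalitions

variable (φ : Fin m → Fin 3 → Fin n × Bool)

theorem insert_z0_image_yv_mem_coal : insert z0 (univ.image yv) ∈ Coal φ z0 := by
  simp [Coal, z0]

theorem insert_z1_image_cl_mem_coal : insert z1 (univ.image cl) ∈ Coal φ z1 := by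
  simp [Coal, z1]

theorem pair_cl_sig_mem_coal (j : Fin m) (u : Fin 3) :
    {cl j, sig (φ j u)} ∈ Coal φ (cl j) := by
  simp only [Coal, cl, mem_image]
  exact ⟨u, mem_univ _, rfl⟩

theorem pair_yv_sig_mem_coal (i : Fin n) (b : Bool) :
    {yv i, sig (i, b)} ∈ Coal φ (yv i) := by
  cases b <;> simp [Coal, yv, sig]

theorem pair_sig_z0_mem_coal (l : Fin n × Bool) : {sig l, z0} ∈ Coal φ (sig l) := by
  obtain ⟨i, _ | _⟩ := l <;> simp [Coal, sig, pv, nv]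

theorem pair_sig_z1_mem_coal (l : Fin n × Bool) : {sig l, z1} ∈ Coal φ (sig l) := by
  obtain ⟨i, _ | _⟩ := l <;> simp [Coal, sig, pv, nv]

end Coalitions

def clauseQuorum (φ : Fin m → Fin 3 → Fin n × Bool) (ρ : Fin m → Fin 3) : Finset (Node n m) :=
  insert z1 (univ.image cl ∪ univ.image fun j => sig (φ j (ρ j)))

def assignmentQuorum (α : Fin n → Bool) : Finset (Node n m) :=
  insert z0 (univ.image yv ∪ univ.image fun i => sig (i, !α i))

theorem isQuorum_clauseQuorum (φ : Fin m → Fin 3 → Fin n × Bool) (ρ : Fin m → Fin 3) :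
    IsQuorum (Coal φ) (clauseQuorum φ ρ) := by
  have hz1 : z1 ∈ clauseQuorum φ ρ := mem_insert_self _ _
  have hcl : ∀ j, cl j ∈ clauseQuorum φ ρ := by simp [clauseQuorum]
  have hsig : ∀ j, sig (φ j (ρ j)) ∈ clauseQuorum φ ρ := by simp [clauseQuorum]
  refine ⟨⟨z1, hz1⟩, fun v hv => ?_⟩
  simp only [clauseQuorum, mem_insert, mem_union, mem_image, mem_univ, true_and] at hv
  rcases hv with rfl | ⟨j, rfl⟩ | ⟨j, rfl⟩
  · exact ⟨_, insert_z1_image_cl_mem_coal φ, insert_subset hz1 (image_subset_iff.2 fun j _ => hcl j)⟩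
  · exact ⟨_, pair_cl_sig_mem_coal φ j (ρ j), by simp [insert_subset_iff, hcl, hsig]⟩
  · exact ⟨_, pair_sig_z1_mem_coal φ _, by simp [insert_subset_iff, hz1, hsig]⟩

theorem isQuorum_assignmentQuorum (φ : Fin m → Fin 3 → Fin n × Bool) (α : Fin n → Bool) :
    IsQuorum (Coal φ) (assignmentQuorum α) := by
  have hz0 : z0 ∈ assignmentQuorum (m := m) α := mem_insert_self _ _
  have hyv : ∀ i, yv i ∈ assignmentQuorum (m := m) α := by simp [assignmentQuorum]
  have hsig : ∀ i, sig (i, !α i) ∈ assignmentQuorum (m := m) α := by simp [assignmentQuorum]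
  refine ⟨⟨z0, hz0⟩, fun v hv => ?_⟩
  simp only [assignmentQuorum, mem_insert, mem_union, mem_image, mem_univ, true_and] at hv
  rcases hv with rfl | ⟨i, rfl⟩ | ⟨i, rfl⟩
  · exact ⟨_, insert_z0_image_yv_mem_coal φ, insert_subset hz0 (image_subset_iff.2 fun i _ => hyv i)⟩
  · exact ⟨_, pair_yv_sig_mem_coal φ i (!α i), by simp [insert_subset_iff, hyv, hsig]⟩
  · exact ⟨_, pair_sig_z0_mem_coal φ _, by simp [insert_subset_iff, hz0, hsig]⟩

theorem sig_ne_sig_of_satisfied {α : Fin n → Bool} {l : Fin n × Bool} (hl : α l.1 = l.2)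
    (i : Fin n) : (sig l : Node n m) ≠ sig (i, !α i) := by
  intro h
  obtain rfl := sig_injective h
  simp at hl

theorem disjoint_clauseQuorum_assignmentQuorum {φ : Fin m → Fin 3 → Fin n × Bool}
    {α : Fin n → Bool} {ρ : Fin m → Fin 3} (hρ : ∀ j, α (φ j (ρ j)).1 = (φ j (ρ j)).2) :
    Disjoint (clauseQuorum φ ρ) (assignmentQuorum α) := by
  refine disjoint_left.2 fun v hv₁ hv₂ => ?_
  simp only [clauseQuorum, assignmentQuorum, mem_insert, mem_union, mem_image, mem_univ,
    true_and] at hv₁ hv₂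
  rcases hv₁ with rfl | ⟨j, rfl⟩ | ⟨j, rfl⟩ <;> rcases hv₂ with h | ⟨i, h⟩ | ⟨i, h⟩
  case inr.inr.inr.inr => exact sig_ne_sig_of_satisfied (hρ j) i h.symm
  all_goals simp [sig, z0, z1, cl, yv, pv, nv, ite_eq_iff, eq_ite_iff] at h

/-- if `α` satisfies `φ` (witnessed by `ρ` picking in each
clause a literal satisfied by `α`), then
`Q1 = {z_1, c_1, …, c_m} ∪ {σ(ρ(c_j))}` and
`Q2 = {z_0, y_1, …, y_n} ∪ {μ(x_i)}` (with `μ(x_i) = n_i` if `α x_i = 1`,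
else `p_i`) are disjoint quora of the reduction instance. -/
theorem satisfiable_gives_disjoint_quora
    (φ : Fin m → Fin 3 → Fin n × Bool) (α : Fin n → Bool) (ρ : Fin m → Fin 3)
    (hρ : ∀ j : Fin m, α (φ j (ρ j)).1 = (φ j (ρ j)).2) :
    IsQuorum (Coal φ)
        (insert z1 (Finset.univ.image cl
          ∪ Finset.univ.image (fun j : Fin m => sig (φ j (ρ j))))) ∧
    IsQuorum (Coal φ)
        (insert z0 (Finset.univ.image yv
          ∪ Finset.univ.image (fun i : Fin n => if α i then nv i else pv i))) ∧
    Disjoint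
        ((insert z1 (Finset.univ.image cl
          ∪ Finset.univ.image (fun j : Fin m => sig (φ j (ρ j))))) : Finset (Node n m))
        ((insert z0 (Finset.univ.image yv
          ∪ Finset.univ.image (fun i : Fin n => if α i then nv i else pv i))) : Finset (Node n m)) := by
  simp only [ite_nv_pv_eq_sig]
  exact ⟨isQuorum_clauseQuorum φ ρ, isQuorum_assignmentQuorum φ α,
    disjoint_clauseQuorum_assignmentQuorum hρ⟩
end

section
/- In the 3SAT reduction instance (as in the context): if there exist two disjoint quora Q_1, Q_2 with z_1 ∈ Q_1 and z_0 ∈ Q_2, then the assignment α defined by α(x_i) = 1 if n_i ∈ Q_2 and α(x_i) = 0 if p_i ∈ Q_2 satisfies every clause of φ. -/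
variable {n m : ℕ}

/-!
The quorum `Q1 ∋ z_1` contains every clause node `c_j`, hence for each clause the node `σ(ℓ)` of
one of its literals `ℓ`; the quorum `Q2 ∋ z_0` contains every `y_i`, hence `p_i` or `n_i`. As the
quora are disjoint, `σ(ℓ) ∉ Q2`, so `Q2` contains the other node of `ℓ`'s variable, and that is
exactly what makes `ℓ` true under `α`.
-/

namespace IsQuorum

variable {V : Type*} [DecidableEq V] {𝒞 : V → Finset (Finset V)} {Q : Finset V} {v : V}

theorem subset_of_slices_eq_singleton (hQ : IsQuorum 𝒞 Q) (hv : v ∈ Q) {C : Finset V}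
    (h : 𝒞 v = {C}) : C ⊆ Q := by
  obtain ⟨C', hC', hsub⟩ := hQ.2 v hv
  rw [h, Finset.mem_singleton] at hC'
  exact hC' ▸ hsub

theorem exists_mem_of_forall_slice (hQ : IsQuorum 𝒞 Q) (hv : v ∈ Q) {p : V → Prop}
    (h : ∀ C ∈ 𝒞 v, ∃ w ∈ C, p w) : ∃ w ∈ Q, p w := by
  obtain ⟨C, hC, hsub⟩ := hQ.2 v hv
  obtain ⟨w, hw, hpw⟩ := h C hC
  exact ⟨w, hsub hw, hpw⟩

end IsQuorum

section Reduction

variable {φ : Fin m → Fin 3 → Fin n × Bool} {Q Q1 Q2 : Finset (Node n m)}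

theorem coal_z0 : Coal φ z0 = {insert z0 (Finset.univ.image yv)} := rfl

theorem coal_z1 : Coal φ z1 = {insert z1 (Finset.univ.image cl)} := rfl

theorem coal_cl (j : Fin m) :
    Coal φ (cl j) = Finset.univ.image (fun u : Fin 3 => {cl j, sig (φ j u)}) := rfl

theorem coal_yv (i : Fin n) : Coal φ (yv i) = {{yv i, pv i}, {yv i, nv i}} := rfl

theorem yv_mem_of_z0_mem (hQ : IsQuorum (Coal φ) Q) (hz0 : z0 ∈ Q) (i : Fin n) : yv i ∈ Q :=
  hQ.subset_of_slices_eq_singleton hz0 coal_z0 <|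
    Finset.mem_insert_of_mem (Finset.mem_image_of_mem _ (Finset.mem_univ i))

theorem cl_mem_of_z1_mem (hQ : IsQuorum (Coal φ) Q) (hz1 : z1 ∈ Q) (j : Fin m) : cl j ∈ Q :=
  hQ.subset_of_slices_eq_singleton hz1 coal_z1 <|
    Finset.mem_insert_of_mem (Finset.mem_image_of_mem _ (Finset.mem_univ j))

theorem pv_mem_or_nv_mem_of_yv_mem (hQ : IsQuorum (Coal φ) Q) {i : Fin n} (hy : yv i ∈ Q) :
    pv i ∈ Q ∨ nv i ∈ Q := by
  obtain ⟨w, hw, rfl | rfl⟩ := hQ.exists_mem_of_forall_slice (p := fun w => w = pv i ∨ w = nv i)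
    hy fun C hC => by
      rw [coal_yv, Finset.mem_insert, Finset.mem_singleton] at hC
      rcases hC with rfl | rfl
      exacts [⟨pv i, by simp, .inl rfl⟩, ⟨nv i, by simp, .inr rfl⟩]
  exacts [.inl hw, .inr hw]

theorem exists_sig_mem_of_cl_mem (hQ : IsQuorum (Coal φ) Q) {j : Fin m} (hc : cl j ∈ Q) :
    ∃ u, sig (φ j u) ∈ Q := by
  obtain ⟨w, hw, u, rfl⟩ := hQ.exists_mem_of_forall_slice (p := fun w => ∃ u, w = sig (φ j u))
    hc fun C hC => by
      obtain ⟨u, -, rfl⟩ := Finset.mem_image.mp (coal_cl j ▸ hC)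
      exact ⟨_, Finset.mem_insert_of_mem (Finset.mem_singleton_self _), u, rfl⟩
  exact ⟨u, hw⟩

theorem decide_nv_mem_eq_of_sig_mem (hd : Disjoint Q1 Q2) {l : Fin n × Bool}
    (hσ : sig l ∈ Q1) (hpn : pv l.1 ∈ Q2 ∨ nv l.1 ∈ Q2) :
    decide (nv l.1 ∈ Q2) = l.2 := by
  obtain ⟨i, _ | _⟩ := l
  · simpa [sig] using Finset.disjoint_left.mp hd hσ
  · have hp : pv i ∉ Q2 := Finset.disjoint_left.mp hd hσ
    simpa [hp] using hpn

end Reduction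

/-- if the reduction instance has two disjoint quora `Q1, Q2`
with `z_1 ∈ Q1` and `z_0 ∈ Q2`, then the assignment `α(x_i) = 1` iff
`n_i ∈ Q2` (and `α(x_i) = 0` when `p_i ∈ Q2`) satisfies every clause of `φ`. -/
theorem disjoint_quora_give_satisfying_assignment
    (φ : Fin m → Fin 3 → Fin n × Bool)
    (Q1 Q2 : Finset (Node n m))
    (h1 : IsQuorum (Coal φ) Q1) (h2 : IsQuorum (Coal φ) Q2)
    (hd : Disjoint Q1 Q2) (hz1 : z1 ∈ Q1) (hz0 : z0 ∈ Q2) :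
    ∀ j : Fin m, ∃ u : Fin 3,
      decide (nv (φ j u).1 ∈ Q2) = (φ j u).2 := by
  intro j
  obtain ⟨u, hσ⟩ := exists_sig_mem_of_cl_mem h1 (cl_mem_of_z1_mem h1 hz1 j)
  exact ⟨u, decide_nv_mem_eq_of_sig_mem hd hσ
    (pv_mem_or_nv_mem_of_yv_mem h2 (yv_mem_of_z0_mem h2 hz0 _))⟩
end
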